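/- (Minkowski inequality for the pan-integral) Let (X, 𝒜, μ) be a monotone measure space with μ subadditive, E ∈ 𝒜, and p ≥ 1. Then for all f, g ∈ L^p_μ(E), ‖f + g‖_{μ,p} ≤ ‖f‖_{μ,p} + ‖g‖_{μ,p}, i.e. (∫_E^pan |f+g|^p dμ)^{1/p} ≤ (∫_E^pan |f|^p dμ)^{1/p} + (∫_E^pan |g|^p dμ)^{1/p}. -/

import Mathlib

open Set Filter
open scoped ENNReal NNReal Topology

variable {X : Type*}

/-- A monotone measure: vanishes on the empty set, positive on the whole space,
and monotone on measurable sets. -/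
structure MonotoneMeasure [MeasurableSpace X] (mu : Set X → ℝ≥0∞) : Prop where
  empty : mu ∅ = 0
  univ_pos : 0 < mu Set.univ
  mono : ∀ ⦃A B : Set X⦄, MeasurableSet A → MeasurableSet B → A ⊆ B → mu A ≤ mu B

/-- A finite measurable partition of `X`. -/
def IsPanPartition [MeasurableSpace X] {n : ℕ} (A : Fin n → Set X) : Prop :=
  (∀ i, MeasurableSet (A i)) ∧ Pairwise (Function.onFun Disjoint A) ∧ (⋃ i, A i) = Set.univ

/-- The `(+,·)`-based pan-integral of a nonnegative function on `X`. -/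
noncomputable def panIntegral [MeasurableSpace X] (mu : Set X → ℝ≥0∞) (f : X → ℝ≥0∞) : ℝ≥0∞ :=
  ⨆ (n : ℕ) (A : Fin n → Set X) (_ : IsPanPartition A) (lam : Fin n → ℝ≥0)
    (_ : ∀ x, ∑ i, Set.indicator (A i) (fun _ => (lam i : ℝ≥0∞)) x ≤ f x),
    ∑ i, (lam i : ℝ≥0∞) * mu (A i)

/-- The pan-integral of `f` on a set `A`, i.e. the pan-integral of `f·χ_A` on `X`. -/
noncomputable def panIntegralOn [MeasurableSpace X] (mu : Set X → ℝ≥0∞) (f : X → ℝ≥0∞)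
    (A : Set X) : ℝ≥0∞ :=
  panIntegral mu (A.indicator f)

/-- Subadditivity of a set function. -/
def PanSubadditive [MeasurableSpace X] (mu : Set X → ℝ≥0∞) : Prop :=
  ∀ ⦃A B : Set X⦄, MeasurableSet A → MeasurableSet B → mu (A ∪ B) ≤ mu A + mu B

/-- Null-additivity of a set function. -/
def PanNullAdditive [MeasurableSpace X] (mu : Set X → ℝ≥0∞) : Prop :=
  ∀ ⦃A B : Set X⦄, MeasurableSet A → MeasurableSet B → mu B = 0 → mu (A ∪ B) = mu A

/-- Continuity from below of a set function. -/
def PanContinuousFromBelow [MeasurableSpace X] (mu : Set X → ℝ≥0∞) : Prop :=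
  ∀ E : ℕ → Set X, (∀ n, MeasurableSet (E n)) → Monotone E →
    Filter.Tendsto (fun n => mu (E n)) Filter.atTop (nhds (mu (⋃ n, E n)))

/-- A real-valued function is pan-integrable if the pan-integrals of its
positive and negative parts are both finite. -/
def PanIntegrable [MeasurableSpace X] (mu : Set X → ℝ≥0∞) (f : X → ℝ) : Prop :=
  panIntegral mu (fun x => ENNReal.ofReal (f x)) < ⊤ ∧
    panIntegral mu (fun x => ENNReal.ofReal (-f x)) < ⊤

/-- The symmetric pan-integral of a real-valued function:
`∫ f⁺ dμ − ∫ f⁻ dμ`. -/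
noncomputable def panIntegralReal [MeasurableSpace X] (mu : Set X → ℝ≥0∞) (f : X → ℝ) : ℝ :=
  (panIntegral mu (fun x => ENNReal.ofReal (f x))).toReal -
    (panIntegral mu (fun x => ENNReal.ofReal (-f x))).toReal

/-- The `‖·‖_{μ,p}` functional: `(∫_E^pan |f|^p dμ)^(1/p)`. -/
noncomputable def panNorm [MeasurableSpace X] (mu : Set X → ℝ≥0∞) (E : Set X) (p : ℝ)
    (f : X → ℝ) : ℝ≥0∞ :=
  (panIntegralOn mu (fun x => ENNReal.ofReal (|f x| ^ p)) E) ^ (1 / p)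

/-!
With `u = |f| χ_E` and `v = |g| χ_E`, it suffices to bound a lower sum `∑ λᵢ μ(Aᵢ)` of
`(u + v)^p`, on whose parts `Lᵢ = λᵢ^(1/p) ≤ u + v`.
Cutting `Aᵢ` into the slices where `k Lᵢ/K ≤ u < (k+1) Lᵢ/K` gives on each slice the constant
lower bounds `aₖ = k Lᵢ/K` for `u` and `bₖ = Lᵢ - (k+1) Lᵢ/K` for `v`, with `aₖ + bₖ ≥ (1 - 1/K) Lᵢ`.
Subadditivity of `μ` lets the slices replace `Aᵢ`, the discrete Minkowski inequality (with weights
`μ` of the slices) splits the refined sum, and its two halves are lower sums for `u^p` and `v^p`.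
Letting `K → ∞` removes the factor `(1 - 1/K)^p`.
-/

open Finset Function Filter Topology

lemma sum_indicator_const_apply_of_mem {ι : Type*} [Fintype ι] {B : ι → Set X}
    (hB : Pairwise (Disjoint on B)) (c : ι → ℝ≥0∞) {i : ι} {x : X} (hx : x ∈ B i) :
    ∑ j, (B j).indicator (fun _ => c j) x = c i := by
  rw [sum_eq_single i (fun j _ hji => indicator_of_notMem
    (fun hxj => disjoint_left.1 (hB hji) hxj hx) _) (by simp), indicator_of_mem hx]

noncomputable def gridLevel (L : ℝ≥0) (K k : ℕ) : ℝ≥0 := k * (L / K)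

lemma gridLevel_succ (L : ℝ≥0) (K k : ℕ) :
    gridLevel L K (k + 1) = gridLevel L K k + L / K := by
  simp only [gridLevel, Nat.cast_succ, add_mul, one_mul]

lemma gridLevel_mono (L : ℝ≥0) (K : ℕ) : Monotone (gridLevel L K) :=
  fun _ _ hkl => by unfold gridLevel; gcongr

lemma one_sub_inv_mul_le_gridLevel_add (L : ℝ≥0) (K k : ℕ) :
    (1 - (K : ℝ≥0)⁻¹) * L ≤ gridLevel L K k + (L - gridLevel L K (k + 1)) := by
  rw [tsub_mul, one_mul, inv_mul_eq_div, tsub_le_iff_right, add_right_comm, ← gridLevel_succ]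
  exact le_add_tsub

def levelSlice (u : X → ℝ≥0∞) (L : ℝ≥0) (K : ℕ) (k : Fin (K + 1)) : Set X :=
  {x | (gridLevel L K k : ℝ≥0∞) ≤ u x} ∩
    if (k : ℕ) = K then univ else {x | u x < gridLevel L K (k + 1)}

lemma sub_gridLevel_succ_le_of_mem_levelSlice {u : X → ℝ≥0∞} {L : ℝ≥0} {K : ℕ} (hK : K ≠ 0)
    {k : Fin (K + 1)} {x : X} (hx : x ∈ levelSlice u L K k) {w : ℝ≥0∞}
    (hL : (L : ℝ≥0∞) ≤ u x + w) :
    ((L - gridLevel L K (k + 1) : ℝ≥0) : ℝ≥0∞) ≤ w := by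
  rw [ENNReal.coe_sub, tsub_le_iff_right]
  by_cases hk : (k : ℕ) = K
  · have : L ≤ gridLevel L K (k + 1) := by
      rw [gridLevel_succ, hk, gridLevel, mul_div_cancel₀ _ (Nat.cast_ne_zero.2 hK)]
      exact le_self_add
    exact (ENNReal.coe_le_coe.2 this).trans le_add_self
  · have hx' : u x < gridLevel L K (k + 1) := by simpa [levelSlice, hk] using hx.2
    calc (L : ℝ≥0∞) ≤ u x + w := hL
      _ ≤ w + gridLevel L K (k + 1) := by rw [add_comm]; gcongr

theorem ENNReal.Lp_add_le_weighted {ι : Type*} (s : Finset ι) (a b w : ι → ℝ≥0∞) {p : ℝ}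
    (hp : 1 ≤ p) :
    (∑ i ∈ s, (a i + b i) ^ p * w i) ^ (1 / p) ≤
      (∑ i ∈ s, a i ^ p * w i) ^ (1 / p) + (∑ i ∈ s, b i ^ p * w i) ^ (1 / p) := by
  have hp0 : 0 < p := by linarith
  have hpow : ∀ c : ι → ℝ≥0∞, ∀ i, (c i * w i ^ (1 / p)) ^ p = c i ^ p * w i := fun c i => by
    rw [ENNReal.mul_rpow_of_nonneg _ _ hp0.le, one_div, ENNReal.rpow_inv_rpow hp0.ne']
  have := ENNReal.Lp_add_le s (fun i => a i * w i ^ (1 / p)) (fun i => b i * w i ^ (1 / p)) hp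
  simp only [← add_mul, hpow] at this
  simpa only [hpow (fun i => a i + b i)] using this

lemma tendsto_one_sub_inv_rpow (p : ℝ) :
    Tendsto (fun K : ℕ => (((1 - (K : ℝ≥0)⁻¹) ^ p : ℝ≥0) : ℝ≥0∞)) atTop (𝓝 1) := by
  rw [← ENNReal.coe_one, ENNReal.tendsto_coe]
  have : Tendsto (fun K : ℕ => 1 - (K : ℝ≥0)⁻¹) atTop (𝓝 1) := by
    simpa using tendsto_const_nhds.sub (tendsto_inv_atTop_nhds_zero_nat (𝕜 := ℝ≥0))
  simpa using this.nnrpow (tendsto_const_nhds (x := p)) (Or.inl one_ne_zero)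

lemma indicator_ofReal_abs_add_le (E : Set X) (f g : X → ℝ) (x : X) :
    E.indicator (fun x => ENNReal.ofReal |f x + g x|) x ≤
      E.indicator (fun x => ENNReal.ofReal |f x|) x +
        E.indicator (fun x => ENNReal.ofReal |g x|) x := by
  by_cases hx : x ∈ E
  · simp only [indicator_of_mem hx, ← ENNReal.ofReal_add (abs_nonneg _) (abs_nonneg _)]
    exact ENNReal.ofReal_le_ofReal (abs_add_le _ _)
  · simp [hx]

section

variable [MeasurableSpace X] {mu : Set X → ℝ≥0∞}

def IsMeasurablePartition {ι : Type*} (B : ι → Set X) : Prop :=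
  (∀ i, MeasurableSet (B i)) ∧ Pairwise (Disjoint on B) ∧ ⋃ i, B i = univ

lemma IsMeasurablePartition.refine {ι κ : Type*} {A : ι → Set X} {C : ι → κ → Set X}
    (hA : IsMeasurablePartition A) (hC : ∀ i, IsMeasurablePartition (C i)) :
    IsMeasurablePartition fun q : ι × κ => A q.1 ∩ C q.1 q.2 := by
  refine ⟨fun q => (hA.1 q.1).inter ((hC q.1).1 q.2), ?_, ?_⟩
  · rintro ⟨i, k⟩ ⟨j, l⟩ hne
    by_cases hij : i = j
    · subst hij
      have hkl : k ≠ l := fun h => hne (by rw [h])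
      exact ((hC i).2.1 hkl).mono inter_subset_right inter_subset_right
    · exact (hA.2.1 hij).mono inter_subset_left inter_subset_left
  · refine eq_univ_of_forall fun x => ?_
    obtain ⟨i, hi⟩ := mem_iUnion.1 (hA.2.2 ▸ mem_univ x)
    obtain ⟨k, hk⟩ := mem_iUnion.1 ((hC i).2.2 ▸ mem_univ x)
    exact mem_iUnion.2 ⟨(i, k), hi, hk⟩

lemma isMeasurablePartition_levelSlice {u : X → ℝ≥0∞} (hu : Measurable u) (L : ℝ≥0) (K : ℕ) :
    IsMeasurablePartition (levelSlice u L K) := by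
  refine ⟨fun k => (measurableSet_le measurable_const hu).inter ?_, ?_, ?_⟩
  · split_ifs
    exacts [MeasurableSet.univ, measurableSet_lt hu measurable_const]
  · refine (pairwise_disjoint_on _).2 fun k l hkl => disjoint_left.2 fun x hxk hxl => ?_
    have hk : (k : ℕ) ≠ K := by omega
    have hxk' : u x < gridLevel L K (k + 1) := by simpa [levelSlice, hk] using hxk.2
    have hlk : (gridLevel L K (k + 1) : ℝ≥0∞) ≤ gridLevel L K l :=
      ENNReal.coe_le_coe.2 (gridLevel_mono L K (by omega))
    exact (hxk'.trans_le (hlk.trans hxl.1)).false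
  · refine eq_univ_of_forall fun x => mem_iUnion.2 ?_
    classical
    -- `x` lies in the first slice whose upper bound exceeds `u x` (or in the top slice)
    have hP : ∃ k, k = K ∨ u x < gridLevel L K (k + 1) := ⟨K, Or.inl rfl⟩
    have hle : Nat.find hP ≤ K := Nat.find_min' hP (Or.inl rfl)
    refine ⟨⟨Nat.find hP, by omega⟩, ?_, ?_⟩
    · change (gridLevel L K (Nat.find hP) : ℝ≥0∞) ≤ u x
      cases hm : Nat.find hP with
      | zero => simp [gridLevel]
      | succ j => exact not_lt.1 (not_or.1 (Nat.find_min hP (hm ▸ j.lt_succ_self))).2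
    · split_ifs with hK
      · trivial
      · exact (Nat.find_spec hP).resolve_left hK

lemma le_panIntegral_of_isMeasurablePartition {ι : Type*} [Fintype ι] {B : ι → Set X}
    (hB : IsMeasurablePartition B) {c : ι → ℝ≥0} {h : X → ℝ≥0∞}
    (hc : ∀ i, ∀ x ∈ B i, (c i : ℝ≥0∞) ≤ h x) :
    ∑ i, (c i : ℝ≥0∞) * mu (B i) ≤ panIntegral mu h := by
  let e := (Fintype.equivFin ι).symm
  have hpart : IsPanPartition fun j => B (e j) :=
    ⟨fun j => hB.1 _, fun j j' hjj => hB.2.1 (e.injective.ne hjj),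
      (e.surjective.iUnion_comp B).trans hB.2.2⟩
  refine le_iSup_of_le _ (le_iSup_of_le _ (le_iSup_of_le hpart (le_iSup_of_le (fun j => c (e j))
    (le_iSup_of_le (fun x => ?_) (e.sum_comp fun i => (c i : ℝ≥0∞) * mu (B i)).ge))))
  obtain ⟨i, hi⟩ := mem_iUnion.1 (hB.2.2 ▸ mem_univ x)
  rw [e.sum_comp fun i => (B i).indicator (fun _ => (c i : ℝ≥0∞)) x,
    sum_indicator_const_apply_of_mem hB.2.1 _ hi]
  exact hc i x hi

lemma panIntegral_le {h : X → ℝ≥0∞} {R : ℝ≥0∞}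
    (H : ∀ (n : ℕ) (A : Fin n → Set X) (lam : Fin n → ℝ≥0), IsMeasurablePartition A →
      (∀ i, ∀ x ∈ A i, (lam i : ℝ≥0∞) ≤ h x) → ∑ i, (lam i : ℝ≥0∞) * mu (A i) ≤ R) :
    panIntegral mu h ≤ R :=
  iSup_le fun n => iSup_le fun A => iSup_le fun hA => iSup_le fun lam => iSup_le fun hlam =>
    H n A lam hA fun i x hx => by
      simpa only [sum_indicator_const_apply_of_mem hA.2.1 _ hx] using hlam x

lemma panIntegral_mono {h h' : X → ℝ≥0∞} (hh : h ≤ h') :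
    panIntegral mu h ≤ panIntegral mu h' :=
  panIntegral_le fun _ _ _ hA hlam =>
    le_panIntegral_of_isMeasurablePartition hA fun i x hx => (hlam i x hx).trans (hh x)

lemma PanSubadditive.apply_iUnion_le (hsub : PanSubadditive mu) (h0 : mu ∅ = 0)
    {ι : Type*} [Fintype ι] {C : ι → Set X} (hC : ∀ i, MeasurableSet (C i)) :
    mu (⋃ i, C i) ≤ ∑ i, mu (C i) := by
  classical
  suffices ∀ s : Finset ι, mu (⋃ i ∈ s, C i) ≤ ∑ i ∈ s, mu (C i) by
    simpa using this univ
  intro s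
  induction s using Finset.induction_on with
  | empty => simp [h0]
  | insert a s ha ih =>
    rw [set_biUnion_insert, sum_insert ha]
    exact (hsub (hC a) (s.measurableSet_biUnion fun i _ => hC i)).trans (by gcongr)

lemma PanSubadditive.apply_le_sum_inter (hsub : PanSubadditive mu) (h0 : mu ∅ = 0)
    {ι : Type*} [Fintype ι] {A : Set X} (hA : MeasurableSet A) {C : ι → Set X}
    (hC : IsMeasurablePartition C) :
    mu A ≤ ∑ i, mu (A ∩ C i) := by
  calc mu A = mu (⋃ i, A ∩ C i) := by rw [← inter_iUnion, hC.2.2, inter_univ]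
    _ ≤ ∑ i, mu (A ∩ C i) := hsub.apply_iUnion_le h0 fun i => hA.inter (hC.1 i)
lemma rpow_one_sub_inv_mul_sum_le_panIntegral (h0 : mu ∅ = 0) (hsub : PanSubadditive mu)
    {u v : X → ℝ≥0∞} (hu : Measurable u) {p : ℝ} (hp : 1 ≤ p) {ι : Type*} [Fintype ι]
    {A : ι → Set X} (hA : IsMeasurablePartition A) {lam : ι → ℝ≥0}
    (hlam : ∀ i, ∀ x ∈ A i, (lam i : ℝ≥0∞) ≤ (u x + v x) ^ p) {K : ℕ} (hK : K ≠ 0) :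
    (((1 - (K : ℝ≥0)⁻¹) ^ p : ℝ≥0) : ℝ≥0∞) * ∑ i, (lam i : ℝ≥0∞) * mu (A i) ≤
      (panIntegral mu (fun x => u x ^ p) ^ (1 / p) +
        panIntegral mu (fun x => v x ^ p) ^ (1 / p)) ^ p := by
  have hp0 : 0 < p := by linarith
  set L : ι → ℝ≥0 := fun i => lam i ^ (1 / p)
  set B : ι × Fin (K + 1) → Set X := fun q => A q.1 ∩ levelSlice u (L q.1) K q.2
  set a : ι × Fin (K + 1) → ℝ≥0 := fun q => gridLevel (L q.1) K q.2
  set b : ι × Fin (K + 1) → ℝ≥0 := fun q => L q.1 - gridLevel (L q.1) K (q.2 + 1)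
  have hB : IsMeasurablePartition B := hA.refine fun i => isMeasurablePartition_levelSlice hu _ K
  have hL : ∀ i, ∀ x ∈ A i, (L i : ℝ≥0∞) ≤ u x + v x := fun i x hx => by
    rw [ENNReal.coe_rpow_of_nonneg _ (by positivity), one_div, ENNReal.rpow_inv_le_iff hp0]
    exact hlam i x hx
  have ha : ∀ q, ∀ x ∈ B q, ((a q ^ p : ℝ≥0) : ℝ≥0∞) ≤ u x ^ p := fun q x hx => by
    rw [ENNReal.coe_rpow_of_nonneg _ hp0.le]
    exact ENNReal.rpow_le_rpow hx.2.1 hp0.le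
  have hb : ∀ q, ∀ x ∈ B q, ((b q ^ p : ℝ≥0) : ℝ≥0∞) ≤ v x ^ p := fun q x hx => by
    rw [ENNReal.coe_rpow_of_nonneg _ hp0.le]
    exact ENNReal.rpow_le_rpow
      (sub_gridLevel_succ_le_of_mem_levelSlice hK hx.2 (hL _ _ hx.1)) hp0.le
  calc (((1 - (K : ℝ≥0)⁻¹) ^ p : ℝ≥0) : ℝ≥0∞) * ∑ i, (lam i : ℝ≥0∞) * mu (A i)
      = ∑ i, ((((1 - (K : ℝ≥0)⁻¹) * L i) ^ p : ℝ≥0) : ℝ≥0∞) * mu (A i) := by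
        rw [mul_sum]
        refine sum_congr rfl fun i _ => ?_
        rw [NNReal.mul_rpow, NNReal.rpow_self_rpow_inv hp0.ne', ENNReal.coe_mul, mul_assoc]
    _ ≤ ∑ q : ι × Fin (K + 1), ((((1 - (K : ℝ≥0)⁻¹) * L q.1) ^ p : ℝ≥0) : ℝ≥0∞) * mu (B q) := by
        rw [Fintype.sum_prod_type]
        gcongr with i
        exact (mul_le_mul_right (hsub.apply_le_sum_inter h0 (hA.1 i)
          (isMeasurablePartition_levelSlice hu (L i) K)) _).trans_eq (mul_sum _ _ _)
    _ ≤ ∑ q, ((a q : ℝ≥0∞) + b q) ^ p * mu (B q) := by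
        gcongr with q
        rw [ENNReal.coe_rpow_of_nonneg _ hp0.le, ← ENNReal.coe_add]
        gcongr
        exact one_sub_inv_mul_le_gridLevel_add _ _ _
    _ ≤ ((∑ q, (a q : ℝ≥0∞) ^ p * mu (B q)) ^ (1 / p) +
          (∑ q, (b q : ℝ≥0∞) ^ p * mu (B q)) ^ (1 / p)) ^ p := by
        simpa only [one_div, ENNReal.rpow_inv_le_iff hp0] using
          ENNReal.Lp_add_le_weighted _ _ _ _ hp
    _ ≤ _ := by
        simp only [← ENNReal.coe_rpow_of_nonneg _ hp0.le]
        gcongr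
        exacts [le_panIntegral_of_isMeasurablePartition hB ha,
          le_panIntegral_of_isMeasurablePartition hB hb]

theorem panIntegral_add_rpow_rpow_le (h0 : mu ∅ = 0) (hsub : PanSubadditive mu)
    {u v : X → ℝ≥0∞} (hu : Measurable u) {p : ℝ} (hp : 1 ≤ p) :
    panIntegral mu (fun x => (u x + v x) ^ p) ^ (1 / p) ≤
      panIntegral mu (fun x => u x ^ p) ^ (1 / p) + panIntegral mu (fun x => v x ^ p) ^ (1 / p) := by
  rw [one_div, ENNReal.rpow_inv_le_iff (by linarith), ← one_div]
  refine panIntegral_le fun _ _ _ hA hlam => ?_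
  simpa only [one_mul] using
    le_of_tendsto (ENNReal.Tendsto.mul_const (tendsto_one_sub_inv_rpow p) (Or.inl one_ne_zero)) <|
      (eventually_ne_atTop 0).mono fun K hK =>
        rpow_one_sub_inv_mul_sum_le_panIntegral h0 hsub hu hp hA hlam hK

lemma panNorm_eq_panIntegral_indicator_rpow (E : Set X) {p : ℝ} (hp : 0 < p) (f : X → ℝ) :
    panNorm mu E p f =
      panIntegral mu (fun x => E.indicator (fun x => ENNReal.ofReal |f x|) x ^ p) ^ (1 / p) := by
  have : E.indicator (fun x => ENNReal.ofReal (|f x| ^ p)) =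
      fun x => E.indicator (fun x => ENNReal.ofReal |f x|) x ^ p := by
    ext x
    by_cases hx : x ∈ E
    · simp [hx, ENNReal.ofReal_rpow_of_nonneg (abs_nonneg _) hp.le]
    · simp [hx, hp]
  rw [panNorm, panIntegralOn, this]

end

theorem panNorm_minkowski_general [MeasurableSpace X]
    (mu : Set X → ℝ≥0∞) (hmu : MonotoneMeasure mu) (hsub : PanSubadditive mu)
    {E : Set X} (hE : MeasurableSet E) (p : ℝ) (hp : 1 ≤ p)
    (f g : X → ℝ) (hf : Measurable f) :
    panNorm mu E p (fun x => f x + g x) ≤ panNorm mu E p f + panNorm mu E p g := by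
  have hp0 : 0 < p := by linarith
  have hu : Measurable (E.indicator fun x => ENNReal.ofReal |f x|) :=
    hf.abs.ennreal_ofReal.indicator hE
  simp only [panNorm_eq_panIntegral_indicator_rpow E hp0]
  calc _ ≤ panIntegral mu (fun x => (E.indicator (fun x => ENNReal.ofReal |f x|) x +
          E.indicator (fun x => ENNReal.ofReal |g x|) x) ^ p) ^ (1 / p) := by
        gcongr
        exact panIntegral_mono fun x => by gcongr; exact indicator_ofReal_abs_add_le E f g x
    _ ≤ _ := panIntegral_add_rpow_rpow_le hmu.empty hsub hu hp

theorem panNorm_minkowski [MeasurableSpace X]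
    (mu : Set X → ℝ≥0∞) (hmu : MonotoneMeasure mu) (hsub : PanSubadditive mu)
    {E : Set X} (hE : MeasurableSet E) (p : ℝ) (hp : 1 ≤ p)
    (f g : X → ℝ) (hf : Measurable f) (hg : Measurable g)
    (hfp : panNorm mu E p f < ⊤) (hgp : panNorm mu E p g < ⊤) :
    panNorm mu E p (fun x => f x + g x) ≤ panNorm mu E p f + panNorm mu E p g :=
  panNorm_minkowski_general mu hmu hsub hE p hp f g hf
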